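/- For the (π/2)-Yao graph of n points drawn independently and uniformly at random from 𝔻^2 (the unit square rotated by π/4), for every constant d > 4, lim_{n→∞} Pr{ some edge of the (π/2)-Yao graph has Euclidean length greater than √(d·log n / n) } = 0. -/

import Mathlib

open MeasureTheory Filter

noncomputable section

/-- The Euclidean plane. -/
abbrev E2 := EuclideanSpace ℝ (Fin 2)

/-- `w` lies in the `q`-th cone of `u`: the angle of `w - u`, measured counterclockwise
from the positive x-direction, lies in `[qπ/2, (q+1)π/2)`.  We express this condition on
each quadrant directly by sign conditions on the coordinates of `w - u`. -/
def inCone (u w : E2) (q : Fin 4) : Prop :=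
  (q = 0 ∧ 0 < w 0 - u 0 ∧ 0 ≤ w 1 - u 1) ∨
  (q = 1 ∧ w 0 - u 0 ≤ 0 ∧ 0 < w 1 - u 1) ∨
  (q = 2 ∧ w 0 - u 0 < 0 ∧ w 1 - u 1 ≤ 0) ∨
  (q = 3 ∧ 0 ≤ w 0 - u 0 ∧ w 1 - u 1 < 0)

/-- `X j` is chosen by `X i` in the `(π/2)`-Yao graph: for some cone of `X i` containing
`X j`, no point of the set lying in that cone is strictly closer to `X i` than `X j`. -/
def yaoDir {n : ℕ} (X : Fin n → E2) (i j : Fin n) : Prop :=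
  ∃ q : Fin 4, inCone (X i) (X j) q ∧
    ∀ k : Fin n, inCone (X i) (X k) q → dist (X i) (X j) ≤ dist (X i) (X k)

/-- Undirected adjacency in the `(π/2)`-Yao graph. -/
def yaoAdj {n : ℕ} (X : Fin n → E2) (i j : Fin n) : Prop :=
  yaoDir X i j ∨ yaoDir X j i

/-- Degree of vertex `i` in the `(π/2)`-Yao graph of the points `X`. -/
def yaoDeg {n : ℕ} (X : Fin n → E2) (i : Fin n) : ℕ :=
  Nat.card {j : Fin n // yaoAdj X i j}

/-- Maximal degree of the `(π/2)`-Yao graph of the points `X`. -/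
def yaoMaxDeg {n : ℕ} (X : Fin n → E2) : ℕ :=
  Finset.univ.sup (yaoDeg X)

/-- `𝔻²`: the unit square rotated by `π/4`, i.e. `{(x,y) : |x| + |y| ≤ √2/2}`. -/
def rotatedSquare : Set E2 := {p | |p 0| + |p 1| ≤ Real.sqrt 2 / 2}

/-- The uniform distribution on `𝔻²` (which has area 1). -/
def unifD2 : Measure E2 := volume.restrict rotatedSquare

/-- `n` points drawn independently and uniformly from `𝔻²`. -/
def Pn (n : ℕ) : Measure (Fin n → E2) := Measure.pi fun _ => unifD2

/-!
If `X i` chooses `X j` in its cone `q` and `|X i - X j| > r`, then no sample point lies in the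
part of that cone within distance `r` of `X i`. Since `X j ∈ 𝔻²` lies in this cone at
ℓ¹-distance more than `r`, there is room for a triangle of area `r² / 4` inside `𝔻²`, the cone
and the ball of radius `r`, so this happens with probability at most `(1 - r² / 4) ^ (n - 1)`.
A union bound over the `4n` pairs `(i, q)` gives `4n (1 - d log n / (4n)) ^ (n - 1)`, which is
`O(n ^ (1 - d / 4)) → 0` for `d > 4`.
-/

open Set

def diamond (c : ℝ) : Set (ℝ × ℝ) := {p | |p.1| + |p.2| ≤ c}

def cornerTriangle (a : ℝ × ℝ) (r : ℝ) : Set (ℝ × ℝ) :=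
  {p | a.1 < p.1 ∧ a.2 < p.2 ∧ p.1 - a.1 + (p.2 - a.2) ≤ r}

lemma abs_add_abs_le_iff {x y c : ℝ} :
    |x| + |y| ≤ c ↔ x + y ≤ c ∧ x - y ≤ c ∧ -x + y ≤ c ∧ -x - y ≤ c := by
  constructor
  · intro h
    have := le_abs_self x; have := neg_abs_le x; have := le_abs_self y; have := neg_abs_le y
    refine ⟨?_, ?_, ?_, ?_⟩ <;> linarith
  · rintro ⟨h₁, h₂, h₃, h₄⟩
    rcases abs_cases x with ⟨hx, -⟩ | ⟨hx, -⟩ <;> rcases abs_cases y with ⟨hy, -⟩ | ⟨hy, -⟩ <;>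
      linarith

lemma measurableSet_diamond (c : ℝ) : MeasurableSet (diamond c) :=
  measurableSet_le (measurable_fst.abs.add measurable_snd.abs) measurable_const

lemma measurableSet_cornerTriangle (a : ℝ × ℝ) (r : ℝ) : MeasurableSet (cornerTriangle a r) :=
  (measurableSet_lt measurable_const measurable_fst).inter
    ((measurableSet_lt measurable_const measurable_snd).inter
      (measurableSet_le ((measurable_fst.sub_const _).add (measurable_snd.sub_const _))
        measurable_const))

lemma volume_diamond {c : ℝ} (hc : 0 ≤ c) :
    volume (diamond c) = ENNReal.ofReal (2 * c ^ 2) := by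
  set f := Matrix.toLin (Module.Basis.finTwoProd ℝ) (Module.Basis.finTwoProd ℝ) !![1, 1; 1, -1]
  have hdet : LinearMap.det f = -2 := by
    rw [LinearMap.det_toLin, Matrix.det_fin_two_of]; norm_num
  have hpre : diamond c = f ⁻¹' (Icc (-c) c ×ˢ Icc (-c) c) := by
    ext p
    simp only [diamond, mem_ofPred_eq, mem_preimage, f, Matrix.toLin_finTwoProd_apply, mem_prod,
      mem_Icc, abs_add_abs_le_iff, one_mul, neg_one_mul]
    constructor
    · rintro ⟨h₁, h₂, h₃, h₄⟩; exact ⟨⟨by linarith, h₁⟩, by linarith, h₂⟩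
    · rintro ⟨⟨h₁, h₂⟩, h₃, h₄⟩; exact ⟨h₂, h₄, by linarith, by linarith⟩
  rw [hpre, Measure.addHaar_preimage_linearMap _ (by rw [hdet]; norm_num), hdet,
    Measure.volume_eq_prod, Measure.prod_prod, Real.volume_Icc,
    ← ENNReal.ofReal_mul (by linarith), ← ENNReal.ofReal_mul (by positivity)]
  congr 1
  norm_num
  ring

lemma volume_regionBetween_diagonal_triangle (a : ℝ × ℝ) {r : ℝ} (hr : 0 ≤ r) :
    volume (regionBetween (fun x => a.2 + (x - a.1)) (fun x => a.2 + r - (x - a.1))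
      (Ioo a.1 (a.1 + r / 2))) = ENNReal.ofReal (r ^ 2 / 4) := by
  rw [Measure.volume_eq_prod, volume_regionBetween_eq_integral
    ((Continuous.integrableOn_Icc (by fun_prop)).mono_set Ioo_subset_Icc_self)
    ((Continuous.integrableOn_Icc (by fun_prop)).mono_set Ioo_subset_Icc_self)
    measurableSet_Ioo (fun x hx => by linarith [hx.2]), ← integral_Ioc_eq_integral_Ioo,
    ← intervalIntegral.integral_of_le (by linarith)]
  congr 1
  have h : ∀ x, (a.2 + r - (x - a.1)) - (a.2 + (x - a.1)) = r - 2 * (x - a.1) :=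
    fun x => by ring
  simp only [Pi.sub_apply, h]
  rw [intervalIntegral.integral_comp_sub_right (fun x => r - 2 * x), sub_self, add_sub_cancel_left,
    intervalIntegral.integral_sub intervalIntegrable_const
      (intervalIntegral.intervalIntegrable_id.const_mul 2),
    intervalIntegral.integral_const_mul, integral_id, intervalIntegral.integral_const, smul_eq_mul]
  ring

/-- The diagonal through `a` cuts `cornerTriangle a r` into two triangles of area `r² / 4`;
as `r ≤ c`, one of them stays clear of the sides `x - y = c` and `y - x = c` of the diamond. -/
lemma ofReal_le_volume_cornerTriangle_inter_diamond {a : ℝ × ℝ} {r c : ℝ}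
    (ha : a ∈ diamond c) (hroom : a.1 + a.2 + r ≤ c) (hr : 0 ≤ r) (hrc : r ≤ c) :
    ENNReal.ofReal (r ^ 2 / 4) ≤ volume (cornerTriangle a r ∩ diamond c) := by
  wlog hside : a.2 - a.1 + r ≤ c generalizing a
  · have hswap : cornerTriangle a.swap r ∩ diamond c =
        Prod.swap ⁻¹' (cornerTriangle a r ∩ diamond c) := by
      ext p
      simp only [cornerTriangle, diamond, mem_inter_iff, mem_ofPred_eq, mem_preimage,
        Prod.fst_swap, Prod.snd_swap]
      constructor <;> rintro ⟨⟨hp₁, hp₂, hp₃⟩, hp₄⟩ <;>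
        exact ⟨⟨hp₂, hp₁, by linarith⟩, by linarith⟩
    calc ENNReal.ofReal (r ^ 2 / 4) ≤ volume (cornerTriangle a.swap r ∩ diamond c) :=
          this (by simpa [diamond, add_comm] using ha)
            (by rw [Prod.fst_swap, Prod.snd_swap]; linarith)
            (by rw [Prod.fst_swap, Prod.snd_swap]; linarith)
      _ = volume (cornerTriangle a r ∩ diamond c) := by
          rw [hswap]
          exact Measure.measurePreserving_swap.measure_preimage_emb
            MeasurableEquiv.prodComm.measurableEmbedding _
  obtain ⟨h₁, h₂, h₃, h₄⟩ := abs_add_abs_le_iff.1 ha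
  rw [← volume_regionBetween_diagonal_triangle a hr]
  refine measure_mono fun p ⟨hp₁, hp₂⟩ => ?_
  simp only [mem_Ioo] at hp₁ hp₂
  exact ⟨⟨hp₁.1, by linarith, by linarith⟩,
    abs_add_abs_le_iff.2 ⟨by linarith, by linarith, by linarith, by linarith⟩⟩

def signedCoords (σ : ℝ × ℝ) (p : E2) : ℝ × ℝ := (σ.1 * p 0, σ.2 * p 1)

lemma measurable_signedCoords (σ : ℝ × ℝ) : Measurable (signedCoords σ) := by
  unfold signedCoords; fun_prop

lemma measurePreserving_const_mul_of_abs_eq_one {s : ℝ} (hs : |s| = 1) :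
    MeasurePreserving (s * ·) volume volume :=
  ⟨measurable_const_mul s, by
    rw [Real.map_volume_mul_left (by rintro rfl; simp at hs), abs_inv, hs]; simp⟩

lemma measurePreserving_signedCoords {σ : ℝ × ℝ} (hσ : |σ.1| = 1 ∧ |σ.2| = 1) :
    MeasurePreserving (signedCoords σ) volume volume :=
  ((measurePreserving_const_mul_of_abs_eq_one hσ.1).prod
    (measurePreserving_const_mul_of_abs_eq_one hσ.2)).comp
    ((measurePreserving_piFinTwo fun _ => volume).comp (PiLp.volume_preserving_ofLp (Fin 2)))

lemma rotatedSquare_eq_preimage_diamond {σ : ℝ × ℝ} (hσ : |σ.1| = 1 ∧ |σ.2| = 1) :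
    rotatedSquare = signedCoords σ ⁻¹' diamond (Real.sqrt 2 / 2) := by
  ext p
  simp [rotatedSquare, diamond, signedCoords, abs_mul, hσ.1, hσ.2]

lemma measurableSet_rotatedSquare : MeasurableSet rotatedSquare :=
  rotatedSquare_eq_preimage_diamond (σ := (1, 1)) (by simp) ▸
    measurable_signedCoords _ (measurableSet_diamond _)

lemma volume_rotatedSquare : volume rotatedSquare = 1 := by
  have hσ : |(1 : ℝ)| = 1 ∧ |(1 : ℝ)| = 1 := by simp
  rw [rotatedSquare_eq_preimage_diamond (σ := (1, 1)) hσ,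
    (measurePreserving_signedCoords hσ).measure_preimage
      (measurableSet_diamond _).nullMeasurableSet,
    volume_diamond (by positivity), div_pow, Real.sq_sqrt zero_le_two]
  norm_num

instance : IsProbabilityMeasure unifD2 :=
  ⟨by rw [unifD2, Measure.restrict_apply_univ, volume_rotatedSquare]⟩

lemma dist_le_abs_add_abs (u w : E2) : dist u w ≤ |w 0 - u 0| + |w 1 - u 1| := by
  rw [EuclideanSpace.dist_eq, Real.sqrt_le_left (by positivity), Fin.sum_univ_two,
    Real.dist_eq, Real.dist_eq, sq_abs, sq_abs]
  nlinarith [abs_nonneg (w 0 - u 0), abs_nonneg (w 1 - u 1), sq_abs (w 0 - u 0),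
    sq_abs (w 1 - u 1)]

/-- Multiplying the coordinates by `quadrantSign q` maps the `q`-th cone into the closed first
quadrant. -/
def quadrantSign : Fin 4 → ℝ × ℝ := ![(1, 1), (-1, 1), (-1, -1), (1, -1)]

lemma abs_quadrantSign (q : Fin 4) : |(quadrantSign q).1| = 1 ∧ |(quadrantSign q).2| = 1 := by
  fin_cases q <;> simp [quadrantSign]

lemma quadrantSign_mul_nonneg_of_inCone {u w : E2} {q : Fin 4} (h : inCone u w q) :
    0 ≤ (quadrantSign q).1 * (w 0 - u 0) ∧ 0 ≤ (quadrantSign q).2 * (w 1 - u 1) := by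
  fin_cases q <;>
    simp only [inCone, quadrantSign, Matrix.cons_val, Fin.reduceEq, Fin.zero_eta, Fin.mk_one,
      Fin.reduceFinMk, true_and, false_and, or_false, false_or] at h ⊢ <;>
    constructor <;> linarith

lemma inCone_of_quadrantSign_mul_pos {u w : E2} {q : Fin 4}
    (h₀ : 0 < (quadrantSign q).1 * (w 0 - u 0)) (h₁ : 0 < (quadrantSign q).2 * (w 1 - u 1)) :
    inCone u w q := by
  fin_cases q <;>
    simp only [inCone, quadrantSign, Matrix.cons_val, Fin.reduceEq, Fin.zero_eta, Fin.mk_one,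
      Fin.reduceFinMk, true_and, false_and, or_false, false_or] at h₀ h₁ ⊢ <;>
    constructor <;> linarith

lemma abs_eq_mul_of_abs_eq_one {s x : ℝ} (hs : |s| = 1) (h : 0 ≤ s * x) : |x| = s * x := by
  rw [← abs_of_nonneg h, abs_mul, hs, one_mul]

lemma measure_pi_forall_ne_notMem_le {α : Type*} [MeasurableSpace α] (μ : Measure α)
    [IsProbabilityMeasure μ] {n : ℕ} (i : Fin (n + 1)) {G : Set α} {R : Set (α × α)}
    (hG : MeasurableSet G) (hR : MeasurableSet R) {p : ENNReal}
    (hp : ∀ u ∈ G, p ≤ μ (Prod.mk u ⁻¹' R)) :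
    Measure.pi (fun _ => μ) {X : Fin (n + 1) → α | X i ∈ G ∧ ∀ k ≠ i, (X i, X k) ∉ R} ≤
      (1 - p) ^ n := by
  set S : Set (α × (Fin n → α)) := Prod.fst ⁻¹' G ∩ ⋂ j, (fun x => (x.1, x.2 j)) ⁻¹' Rᶜ
  have hS : MeasurableSet S := (measurable_fst hG).inter <| .iInter fun j =>
    (measurable_fst.prodMk ((measurable_pi_apply j).comp measurable_snd)) hR.compl
  have hpre : {X : Fin (n + 1) → α | X i ∈ G ∧ ∀ k ≠ i, (X i, X k) ∉ R} =
      MeasurableEquiv.piFinSuccAbove (fun _ => α) i ⁻¹' S := by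
    ext X
    simp [S, Fin.forall_iff_succAbove i, Fin.removeNth_apply]
  rw [hpre, (measurePreserving_piFinSuccAbove (fun _ => μ) i).measure_preimage_equiv,
    Measure.prod_apply hS]
  calc ∫⁻ u, Measure.pi (fun _ => μ) (Prod.mk u ⁻¹' S) ∂μ ≤ ∫⁻ _, (1 - p) ^ n ∂μ :=
        lintegral_mono fun u => ?_
    _ = (1 - p) ^ n := by simp
  by_cases hu : u ∈ G
  · have : Prod.mk u ⁻¹' S = Set.pi univ fun _ => (Prod.mk u ⁻¹' R)ᶜ := by ext; simp [S, hu]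
    rw [this, Measure.pi_pi, Finset.prod_const, Finset.card_univ, Fintype.card_fin,
      prob_compl_eq_one_sub (measurable_prodMk_left hR)]
    gcongr
    exact hp u hu
  · have : Prod.mk u ⁻¹' S = ∅ := by ext; simp [S, hu]
    simp [this]

/-- `u ∈ 𝔻²`, and the side `σ.1 x + σ.2 y = √2 / 2` of `𝔻²` faced by the `q`-th cone of `u`
(where `σ = quadrantSign q`) is at ℓ¹-distance at least `r` from `u`. -/
def hasRoom (q : Fin 4) (r : ℝ) : Set E2 :=
  {u | u ∈ rotatedSquare ∧
    (signedCoords (quadrantSign q) u).1 + (signedCoords (quadrantSign q) u).2 + r ≤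
      Real.sqrt 2 / 2}

def coneTriangleRel (q : Fin 4) (r : ℝ) : Set (E2 × E2) :=
  {x | signedCoords (quadrantSign q) x.2 ∈
    cornerTriangle (signedCoords (quadrantSign q) x.1) r}

lemma measurableSet_hasRoom (q : Fin 4) (r : ℝ) : MeasurableSet (hasRoom q r) :=
  measurableSet_rotatedSquare.inter <| measurableSet_le
    (((measurable_signedCoords _).fst.add (measurable_signedCoords _).snd).add_const r)
    measurable_const

lemma measurableSet_coneTriangleRel (q : Fin 4) (r : ℝ) :
    MeasurableSet (coneTriangleRel q r) := by
  have hf : Measurable fun x : E2 × E2 => signedCoords (quadrantSign q) x.1 :=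
    (measurable_signedCoords _).comp measurable_fst
  have hs : Measurable fun x : E2 × E2 => signedCoords (quadrantSign q) x.2 :=
    (measurable_signedCoords _).comp measurable_snd
  exact (measurableSet_lt hf.fst hs.fst).inter ((measurableSet_lt hf.snd hs.snd).inter
    (measurableSet_le ((hs.fst.sub hf.fst).add (hs.snd.sub hf.snd)) measurable_const))

lemma inCone_and_dist_le_of_mem_coneTriangleRel {u w : E2} {q : Fin 4} {r : ℝ}
    (h : (u, w) ∈ coneTriangleRel q r) : inCone u w q ∧ dist u w ≤ r := by
  obtain ⟨h₀, h₁, hr⟩ := h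
  obtain ⟨hσ₀, hσ₁⟩ := abs_quadrantSign q
  simp only [signedCoords] at h₀ h₁ hr
  have h₀' : 0 < (quadrantSign q).1 * (w 0 - u 0) := by linarith
  have h₁' : 0 < (quadrantSign q).2 * (w 1 - u 1) := by linarith
  refine ⟨inCone_of_quadrantSign_mul_pos h₀' h₁', (dist_le_abs_add_abs u w).trans ?_⟩
  rw [abs_eq_mul_of_abs_eq_one hσ₀ h₀'.le, abs_eq_mul_of_abs_eq_one hσ₁ h₁'.le]
  linarith

lemma ofReal_le_unifD2_coneTriangle {q : Fin 4} {r : ℝ} {u : E2} (hu : u ∈ hasRoom q r)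
    (hr : 0 ≤ r) (hrc : r ≤ Real.sqrt 2 / 2) :
    ENNReal.ofReal (r ^ 2 / 4) ≤ unifD2 (Prod.mk u ⁻¹' coneTriangleRel q r) := by
  have hσ := abs_quadrantSign q
  have hpre : Prod.mk u ⁻¹' coneTriangleRel q r ∩ rotatedSquare =
      signedCoords (quadrantSign q) ⁻¹'
        (cornerTriangle (signedCoords (quadrantSign q) u) r ∩ diamond (Real.sqrt 2 / 2)) := by
    rw [rotatedSquare_eq_preimage_diamond hσ]; rfl
  rw [unifD2, Measure.restrict_apply' measurableSet_rotatedSquare, hpre,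
    (measurePreserving_signedCoords hσ).measure_preimage
      ((measurableSet_cornerTriangle _ _).inter (measurableSet_diamond _)).nullMeasurableSet]
  obtain ⟨hsq, hroom⟩ := hu
  rw [rotatedSquare_eq_preimage_diamond hσ] at hsq
  exact ofReal_le_volume_cornerTriangle_inter_diamond hsq hroom hr hrc

lemma Pn_emptyConeTriangle_le {n : ℕ} (i : Fin n) (q : Fin 4) {r : ℝ} (hr : 0 ≤ r)
    (hrc : r ≤ Real.sqrt 2 / 2) :
    Pn n {X | X i ∈ hasRoom q r ∧ ∀ k ≠ i, (X i, X k) ∉ coneTriangleRel q r} ≤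
      (1 - ENNReal.ofReal (r ^ 2 / 4)) ^ (n - 1) := by
  obtain ⟨m, rfl⟩ : ∃ m, n = m + 1 := Nat.exists_eq_add_one.2 i.pos
  exact measure_pi_forall_ne_notMem_le unifD2 i (measurableSet_hasRoom q r)
    (measurableSet_coneTriangleRel q r) fun u hu => ofReal_le_unifD2_coneTriangle hu hr hrc

lemma exists_emptyConeTriangle_of_yaoDir {n : ℕ} {X : Fin n → E2}
    (hX : ∀ k, X k ∈ rotatedSquare) {i j : Fin n} (hij : yaoDir X i j) {r : ℝ}
    (hlong : r < dist (X i) (X j)) :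
    ∃ q, X i ∈ hasRoom q r ∧ ∀ k ≠ i, (X i, X k) ∉ coneTriangleRel q r := by
  obtain ⟨q, hcone, hnearest⟩ := hij
  refine ⟨q, ⟨hX i, ?_⟩, fun k _ hk => ?_⟩
  · -- `σ • X j ≤ √2 / 2` as `X j ∈ 𝔻²`, while `σ • (X j - X i) = ‖X j - X i‖₁ ≥ dist > r`.
    obtain ⟨hσ₀, hσ₁⟩ := abs_quadrantSign q
    obtain ⟨h₀, h₁⟩ := quadrantSign_mul_nonneg_of_inCone hcone
    have hXj := hX j
    rw [rotatedSquare_eq_preimage_diamond (abs_quadrantSign q)] at hXj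
    have hdist := dist_le_abs_add_abs (X i) (X j)
    rw [abs_eq_mul_of_abs_eq_one hσ₀ h₀, abs_eq_mul_of_abs_eq_one hσ₁ h₁] at hdist
    simp only [signedCoords, diamond, mem_preimage, mem_ofPred_eq] at hXj ⊢
    linarith [le_abs_self ((quadrantSign q).1 * X j 0), le_abs_self ((quadrantSign q).2 * X j 1)]
  · obtain ⟨hkcone, hkdist⟩ := inCone_and_dist_le_of_mem_coneTriangleRel hk
    linarith [hnearest k hkcone]

lemma Pn_long_yaoEdge_le (n : ℕ) {r : ℝ} (hr : 0 ≤ r) (hrc : r ≤ Real.sqrt 2 / 2) :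
    Pn n {X : Fin n → E2 | ∃ i j, yaoAdj X i j ∧ r < dist (X i) (X j)} ≤
      ENNReal.ofReal (4 * (n * (1 - r ^ 2 / 4) ^ (n - 1))) := by
  have hae : ∀ᵐ X ∂Pn n, ∀ k, X k ∈ rotatedSquare := ae_all_iff.2 fun k =>
    Measure.tendsto_eval_ae_ae (ae_restrict_mem measurableSet_rotatedSquare)
  set A : Fin n → Fin 4 → Set (Fin n → E2) :=
    fun i q => {X | X i ∈ hasRoom q r ∧ ∀ k ≠ i, (X i, X k) ∉ coneTriangleRel q r}
  have hsub : {X : Fin n → E2 | ∃ i j, yaoAdj X i j ∧ r < dist (X i) (X j)} ≤ᵐ[Pn n]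
      ⋃ i, ⋃ q, A i q := by
    filter_upwards [hae] with X hX ⟨i, j, hadj, hlong⟩
    rcases hadj with hij | hji
    · obtain ⟨q, hq⟩ := exists_emptyConeTriangle_of_yaoDir hX hij hlong
      exact mem_iUnion₂.2 ⟨i, q, hq⟩
    · obtain ⟨q, hq⟩ := exists_emptyConeTriangle_of_yaoDir hX hji (dist_comm (X i) _ ▸ hlong)
      exact mem_iUnion₂.2 ⟨j, q, hq⟩
  have hr4 : r ^ 2 / 4 ≤ 1 := by nlinarith [Real.sq_sqrt zero_le_two, Real.sqrt_nonneg 2]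
  calc Pn n _ ≤ ∑ i, ∑ q, Pn n (A i q) :=
        (measure_mono_ae hsub).trans <| (measure_iUnion_fintype_le _ _).trans <|
          Finset.sum_le_sum fun i _ => measure_iUnion_fintype_le _ _
    _ ≤ ∑ _i : Fin n, ∑ _q : Fin 4, (1 - ENNReal.ofReal (r ^ 2 / 4)) ^ (n - 1) := by
        gcongr with i _ q _
        exact Pn_emptyConeTriangle_le i q hr hrc
    _ = ENNReal.ofReal (4 * (n * (1 - r ^ 2 / 4) ^ (n - 1))) := by
        rw [← ENNReal.ofReal_one, ← ENNReal.ofReal_sub _ (by positivity),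
          ← ENNReal.ofReal_pow (by linarith), ENNReal.ofReal_mul (by norm_num),
          ENNReal.ofReal_mul (by positivity)]
        simp only [Finset.sum_const, Finset.card_univ, Fintype.card_fin, nsmul_eq_mul,
          Nat.cast_ofNat, ENNReal.ofReal_ofNat, ENNReal.ofReal_natCast]
        ring

lemma tendsto_const_mul_log_div (d : ℝ) :
    Tendsto (fun n : ℕ => d * Real.log n / n) atTop (nhds 0) := by
  have h : Tendsto (fun x : ℝ => Real.log x / x) atTop (nhds 0) :=
    Real.isLittleO_log_id_atTop.tendsto_div_nhds_zero
  have := (h.comp tendsto_natCast_atTop_atTop).const_mul d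
  rw [mul_zero] at this
  refine this.congr fun n => ?_
  simp only [Function.comp_apply]
  ring

lemma tendsto_mul_one_sub_log_div_pow {d : ℝ} (hd : 4 < d) :
    Tendsto (fun n : ℕ => (n : ℝ) * (1 - d * Real.log n / n / 4) ^ (n - 1)) atTop (nhds 0) := by
  have hlim : Tendsto (fun n : ℕ => Real.exp 1 * (n : ℝ) ^ (-(d / 4 - 1))) atTop (nhds 0) := by
    have h : Tendsto (fun x : ℝ => x ^ (-(d / 4 - 1))) atTop (nhds 0) :=
      tendsto_rpow_neg_atTop (by linarith)
    have := (h.comp tendsto_natCast_atTop_atTop).const_mul (Real.exp 1)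
    rwa [mul_zero] at this
  have hsmall : ∀ᶠ n : ℕ in atTop, d * Real.log n / n / 4 ≤ 1 :=
    ((tendsto_const_mul_log_div d).div_const 4).eventually
      (eventually_le_nhds (by norm_num))
  refine squeeze_zero' ?_ ?_ hlim
  · filter_upwards [hsmall] with n hx1
    have : 0 ≤ 1 - d * Real.log n / n / 4 := by linarith
    positivity
  filter_upwards [hsmall, eventually_ge_atTop 1] with n hx1 hn1
  set x := d * Real.log n / n / 4
  have hn : (0 : ℝ) < n := by exact_mod_cast hn1
  have hx0 : 0 ≤ x := by have := Real.log_natCast_nonneg n; positivity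
  have hxn : x * n = d / 4 * Real.log n := by simp only [x]; field_simp
  calc (n : ℝ) * (1 - x) ^ (n - 1) ≤ n * Real.exp (-x) ^ (n - 1) := by
        gcongr
        linarith [Real.add_one_le_exp (-x)]
    _ = n * (Real.exp x * (n : ℝ) ^ (-(d / 4))) := by
        rw [← Real.exp_nat_mul, Real.rpow_def_of_pos hn, ← Real.exp_add, Nat.cast_sub hn1]
        congr 2
        push_cast
        linear_combination -hxn
    _ ≤ n * (Real.exp 1 * (n : ℝ) ^ (-(d / 4))) := by gcongr
    _ = Real.exp 1 * (n : ℝ) ^ (-(d / 4 - 1)) := by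
        rw [neg_sub, sub_eq_add_neg, Real.rpow_add hn, Real.rpow_one]; ring

/-- For every `d > 4`, the probability that some edge of the
`(π/2)`-Yao graph of `n` i.i.d. uniform points in `𝔻²` has Euclidean length greater
than `√(d log n / n)` tends to `0`. -/
theorem yao_max_edge_length (d : ℝ) (hd : 4 < d) :
    Tendsto
      (fun n : ℕ => Pn n {X : Fin n → E2 |
        ∃ i j : Fin n, yaoAdj X i j ∧
          Real.sqrt (d * Real.log n / n) < dist (X i) (X j)})
      atTop (nhds 0) := by
  have hbound : ∀ᶠ n : ℕ in atTop, Pn n {X : Fin n → E2 | ∃ i j : Fin n, yaoAdj X i j ∧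
      Real.sqrt (d * Real.log n / n) < dist (X i) (X j)} ≤
        ENNReal.ofReal (4 * (n * (1 - d * Real.log n / n / 4) ^ (n - 1))) := by
    filter_upwards [(tendsto_const_mul_log_div d).eventually (eventually_le_nhds one_half_pos)]
      with n hsmall
    have hρ : 0 ≤ d * Real.log n / n := by have := Real.log_natCast_nonneg n; positivity
    have hrc : Real.sqrt (d * Real.log n / n) ≤ Real.sqrt 2 / 2 := by
      rw [Real.sqrt_le_left (by positivity), div_pow, Real.sq_sqrt zero_le_two]
      linarith
    simpa only [Real.sq_sqrt hρ] using Pn_long_yaoEdge_le n (Real.sqrt_nonneg _) hrc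
  have hlim := ENNReal.tendsto_ofReal ((tendsto_mul_one_sub_log_div_pow hd).const_mul 4)
  rw [mul_zero, ENNReal.ofReal_zero] at hlim
  exact tendsto_of_tendsto_of_tendsto_of_le_of_le' tendsto_const_nhds hlim
    (Eventually.of_forall fun _ => zero_le) hbound

end
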